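/- arXiv:2603.25456 — 5 statements merged into one kernel-verified Lean document; each statement's English description precedes it below -/
import Mathlib

section
/- Let n be a positive integer and let B be the group of upper-triangular matrices in SL(n, ℂ), i.e. those g in SL(n, ℂ) with g i j = 0 whenever i > j. Let Λ_1 ⊂ Λ_2 ⊂ ⋯ ⊂ Λ_t be subspaces of ℂ^n with dim Λ_i = i for 1 ≤ i ≤ t, and let S be the subgroup of B consisting of all g with g(Λ_i) = Λ_i for every 1 ≤ i ≤ t. Then the action of S on the set of one-dimensional subspaces of ℂ^n (where g sends a subspace W to its image g(W) under the associated linear map) has only finitely many orbits, i.e. the orbit space is finite. -/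
open Matrix Submodule Finset

namespace FlagOrbAux

variable {n : ℕ}

noncomputable def lead (w : Fin n → ℂ) : ℕ :=
  (Finset.univ.filter fun k => w k ≠ 0).sup Fin.val

theorem exists_lead {w : Fin n → ℂ} (hw : w ≠ 0) :
    ∃ k : Fin n, w k ≠ 0 ∧ (k : ℕ) = lead w := by
  classical
  have hne : (Finset.univ.filter fun k => w k ≠ 0).Nonempty := by
    rcases Function.ne_iff.mp hw with ⟨k, hk⟩
    exact ⟨k, by simpa using hk⟩
  obtain ⟨k, hk, hk2⟩ := Finset.exists_mem_eq_sup _ hne Fin.val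
  exact ⟨k, by simpa using hk, hk2.symm⟩

theorem le_lead {w : Fin n → ℂ} {k : Fin n} (h : w k ≠ 0) : (k : ℕ) ≤ lead w := by
  classical
  exact Finset.le_sup (by simpa using h)

theorem lead_lt {w : Fin n → ℂ} (hw : w ≠ 0) {a : ℕ}
    (h : ∀ k : Fin n, a ≤ (k : ℕ) → w k = 0) : lead w < a := by
  obtain ⟨k, hk, hkl⟩ := exists_lead hw
  rcases lt_or_ge (k : ℕ) a with h' | h'
  · omega
  · exact absurd (h k h') hk

theorem exists_triangular_adapted (hn : 0 < n) (t : ℕ)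
    (Λ : ℕ → Submodule ℂ (Fin n → ℂ))
    (hΛdim : ∀ i, 1 ≤ i → i ≤ t → Module.finrank ℂ ↥(Λ i) = i)
    (hΛmono : ∀ i j, 1 ≤ i → i ≤ j → j ≤ t → Λ i ≤ Λ j) :
    ∃ P : Matrix (Fin n) (Fin n) ℂ, P.BlockTriangular id ∧ IsUnit P.det ∧
      ∀ i, 1 ≤ i → i ≤ t → ∃ A : Set (Fin n),
        Λ i = Submodule.span ℂ ((fun k => P *ᵥ Pi.single k 1) '' A) := by
  classical
  -- the flag extended by ⊥ at 0
  set M : ℕ → Submodule ℂ (Fin n → ℂ) := fun i => if i = 0 then ⊥ else Λ i with hM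
  have hM0 : M 0 = ⊥ := by simp [hM]
  have hMs : ∀ i, i ≠ 0 → M i = Λ i := fun i hi => by simp [hM, hi]
  have hMdim : ∀ i, i ≤ t → Module.finrank ℂ ↥(M i) = i := by
    intro i hi
    rcases Nat.eq_zero_or_pos i with rfl | hpos
    · rw [hM0]; simp
    · rw [hMs i (by omega)]; exact hΛdim i hpos hi
  have hMmono : ∀ i j, i ≤ j → j ≤ t → M i ≤ M j := by
    intro i j hij hjt
    rcases Nat.eq_zero_or_pos i with rfl | hpos
    · rw [hM0]; exact bot_le
    · rw [hMs i (by omega), hMs j (by omega)]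
      exact hΛmono i j hpos hij hjt
  have hMlt : ∀ i, i < t → M i < M (i + 1) := by
    intro i hit
    refine lt_of_le_of_ne (hMmono i (i + 1) (by omega) (by omega)) ?_
    intro h
    have h1 := hMdim i (by omega)
    rw [h, hMdim (i + 1) (by omega)] at h1
    omega
  -- choose minimal-lead vectors
  have hchoice : ∀ i, i < t → ∃ w, w ∈ M (i + 1) ∧ w ∉ M i ∧
      ∀ w', w' ∈ M (i + 1) → w' ∉ M i → lead w ≤ lead w' := by
    intro i hit
    obtain ⟨w₀, hw₀1, hw₀2⟩ := SetLike.exists_of_lt (hMlt i hit)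
    have hne : {m : ℕ | ∃ w, w ∈ M (i + 1) ∧ w ∉ M i ∧ lead w = m}.Nonempty :=
      ⟨lead w₀, w₀, hw₀1, hw₀2, rfl⟩
    obtain ⟨m, ⟨w, hw1, hw2, hw3⟩, hmin⟩ := Nat.lt_wfRel.wf.has_min _ hne
    refine ⟨w, hw1, hw2, fun w' h1 h2 => ?_⟩
    have := hmin (lead w') ⟨w', h1, h2, rfl⟩
    change ¬ lead w' < m at this
    omega
  set u : ℕ → (Fin n → ℂ) := fun i => if h : i < t then (hchoice i h).choose else 0 with hu
  have hu1 : ∀ i, (h : i < t) → u i ∈ M (i + 1) := fun i h => by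
    rw [hu]; simp only [h, dif_pos]; exact (hchoice i h).choose_spec.1
  have hu2 : ∀ i, (h : i < t) → u i ∉ M i := fun i h => by
    rw [hu]; simp only [h, dif_pos]; exact (hchoice i h).choose_spec.2.1
  have hu3 : ∀ i, (h : i < t) → ∀ w', w' ∈ M (i + 1) → w' ∉ M i → lead (u i) ≤ lead w' :=
    fun i h => by
      rw [hu]; simp only [h, dif_pos]; exact (hchoice i h).choose_spec.2.2
  have hune : ∀ i, i < t → u i ≠ 0 := by
    intro i h h0
    exact hu2 i h (h0 ▸ (M i).zero_mem)
  -- distinct leads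
  have hdist : ∀ i j, i < j → j < t → lead (u i) ≠ lead (u j) := by
    intro i j hij hjt heq
    obtain ⟨k, hk, hkl⟩ := exists_lead (hune j hjt)
    obtain ⟨k', hk', hkl'⟩ := exists_lead (hune i (by omega))
    have hik : u i k ≠ 0 := by
      rw [show k = k' from Fin.ext (by omega)]; exact hk'
    have huiMj : u i ∈ M j := hMmono (i + 1) j (by omega) (by omega) (hu1 i (by omega))
    set w' : Fin n → ℂ := u j - (u j k / u i k) • u i with hw'
    have hw'1 : w' ∈ M (j + 1) :=
      sub_mem (hu1 j hjt) (Submodule.smul_mem _ _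
        (hMmono j (j + 1) (by omega) (by omega) huiMj))
    have hw'2 : w' ∉ M j := by
      intro hmem
      apply hu2 j hjt
      have heq2 : u j = w' + (u j k / u i k) • u i := by rw [hw']; abel
      rw [heq2]
      exact add_mem hmem (Submodule.smul_mem _ _ huiMj)
    have hw'0 : w' ≠ 0 := fun h0 => hw'2 (h0 ▸ (M j).zero_mem)
    have hzero : ∀ m : Fin n, lead (u j) ≤ (m : ℕ) → w' m = 0 := by
      intro m hm
      rcases eq_or_lt_of_le hm with hm' | hm'
      · have hmk : m = k := Fin.ext (by omega)
        subst hmk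
        simp only [hw', Pi.sub_apply, Pi.smul_apply, smul_eq_mul]
        field_simp
        ring
      · have h1 : u j m = 0 := by
          by_contra hne
          have := le_lead hne; omega
        have h2 : u i m = 0 := by
          by_contra hne
          have := le_lead hne; omega
        simp [hw', h1, h2]
    have hlt : lead w' < lead (u j) := lead_lt hw'0 hzero
    have := hu3 j hjt w' hw'1 hw'2
    omega
  -- spans
  have hspan : ∀ i, i ≤ t → M i = Submodule.span ℂ (u '' {j | j < i}) := by
    intro i
    induction i with
    | zero => intro _; rw [hM0]; simp
    | succ i ih =>
      intro hit
      have hi : i < t := by omega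
      have hins : {j | j < i + 1} = insert i {j | j < i} := by
        ext j; simp; omega
      rw [hins, Set.image_insert_eq, Submodule.span_insert, ← ih (by omega)]
      have hle : Submodule.span ℂ {u i} ⊔ M i ≤ M (i + 1) :=
        sup_le ((Submodule.span_singleton_le_iff_mem _ _).mpr (hu1 i hi))
          (hMmono i (i + 1) (by omega) hit)
      have hlt : M i < Submodule.span ℂ {u i} ⊔ M i := by
        refine lt_of_le_of_ne le_sup_right ?_
        intro h
        exact hu2 i hi (h ▸ le_sup_left (a := Submodule.span ℂ {u i})
          (Submodule.mem_span_singleton_self (u i)))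
      have h1 : i < Module.finrank ℂ ↥(Submodule.span ℂ {u i} ⊔ M i) := by
        have := Submodule.finrank_lt_finrank_of_lt hlt
        rw [hMdim i (by omega)] at this
        omega
      refine (Submodule.eq_of_le_of_finrank_le hle ?_).symm
      rw [hMdim (i + 1) hit]
      omega
  -- the Fin-valued leads
  have hκex : ∀ i, i < t → ∃ k : Fin n, u i k ≠ 0 ∧ (k : ℕ) = lead (u i) :=
    fun i h => exists_lead (hune i h)
  set κ : ℕ → Fin n := fun i => if h : i < t then (hκex i h).choose else ⟨0, hn⟩ with hκ
  have hκ1 : ∀ i, (h : i < t) → u i (κ i) ≠ 0 := fun i h => by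
    rw [hκ]; simp only [h, dif_pos]; exact (hκex i h).choose_spec.1
  have hκ2 : ∀ i, (h : i < t) → ((κ i : ℕ)) = lead (u i) := fun i h => by
    rw [hκ]; simp only [h, dif_pos]; exact (hκex i h).choose_spec.2
  have hκinj : ∀ i j, i < t → j < t → κ i = κ j → i = j := by
    intro i j hi hj hij
    by_contra hne
    rcases Nat.lt_or_ge i j with h | h
    · exact hdist i j h hj (by rw [← hκ2 i hi, ← hκ2 j hj, hij])
    · have h' : j < i := by omega
      exact hdist j i h' hi (by rw [← hκ2 i hi, ← hκ2 j hj, hij])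
  -- the matrix
  set P : Matrix (Fin n) (Fin n) ℂ := fun m k =>
    if h : ∃ i, i < t ∧ κ i = k then u (h.choose) m else (if m = k then 1 else 0) with hP
  have hcol : ∀ i, (h : i < t) → (fun m => P m (κ i)) = u i := by
    intro i h
    have hex : ∃ i', i' < t ∧ κ i' = κ i := ⟨i, h, rfl⟩
    funext m
    simp only [hP]
    simp only [hex, dif_pos]
    rw [hκinj hex.choose i hex.choose_spec.1 h hex.choose_spec.2]
  have htri : P.BlockTriangular id := by
    intro m k hmk
    simp only [id] at hmk
    simp only [hP]
    split
    · next hex =>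
      have h1 := hκ2 hex.choose hex.choose_spec.1
      rw [hex.choose_spec.2] at h1
      by_contra hne
      have := le_lead hne
      rw [← h1] at this
      have : (m : ℕ) ≤ (k : ℕ) := this
      exact absurd hmk (by omega)
    · next =>
      rw [if_neg (by intro h; subst h; exact absurd hmk (lt_irrefl _))]
  have hdiag : ∀ k, P k k ≠ 0 := by
    intro k
    simp only [hP]
    split
    · next hex =>
      have := hκ1 hex.choose hex.choose_spec.1
      rw [hex.choose_spec.2] at this
      exact this
    · next => simp
  have hdet : IsUnit P.det := by
    rw [Matrix.det_of_upperTriangular htri]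
    exact isUnit_iff_ne_zero.mpr (Finset.prod_ne_zero_iff.mpr fun k _ => hdiag k)
  refine ⟨P, htri, hdet, ?_⟩
  intro i h1i hit
  refine ⟨κ '' {j | j < i}, ?_⟩
  rw [← hMs i (by omega), hspan i hit, ← Set.image_comp]
  congr 1
  apply Set.image_congr
  intro j hj
  have hjt : j < t := by have : j < i := hj; omega
  simp only [Function.comp]
  rw [Matrix.mulVec_single]
  rw [← hcol j hjt]
  funext m
  simp

end FlagOrbAux

theorem finrank_one_rep {W : Submodule ℂ (Fin n → ℂ)} (h : Module.finrank ℂ ↥W = 1) :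
    ∃ w : Fin n → ℂ, w ≠ 0 ∧ W = Submodule.span ℂ {w} := by
  have hbot : W ≠ ⊥ := by
    intro h0
    rw [h0] at h
    simp at h
  obtain ⟨w, hw1, hw2⟩ := Submodule.exists_mem_ne_zero_of_ne_bot hbot
  refine ⟨w, hw2, ?_⟩
  refine (Submodule.eq_of_le_of_finrank_le ((Submodule.span_singleton_le_iff_mem _ _).mpr hw1) ?_).symm
  rw [h, finrank_span_singleton hw2]





/-- **Finiteness of orbits of the stabilizer of a partial flag on lines.**
Let `B` be the Borel subgroup of upper-triangular matrices in `SL(n, ℂ)` and let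
`S ⊆ B` be the stabilizer of a partial flag `Λ 1 ⊂ ⋯ ⊂ Λ t` with `dim (Λ i) = i`.
Then `S` acts on the set of one-dimensional subspaces of `ℂ^n` with finitely many
orbits. -/
theorem stabilizer_of_flag_finitely_many_orbits_on_lines
    (n : ℕ) (hn : 0 < n) (t : ℕ)
    (Λ : ℕ → Submodule ℂ (Fin n → ℂ))
    (hΛdim : ∀ i, 1 ≤ i → i ≤ t → Module.finrank ℂ ↥(Λ i) = i)
    (hΛmono : ∀ i j, 1 ≤ i → i ≤ j → j ≤ t → Λ i ≤ Λ j) :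
    Finite (Quot (fun W W' : {W : Submodule ℂ (Fin n → ℂ) // Module.finrank ℂ ↥W = 1} =>
      ∃ g : Matrix.SpecialLinearGroup (Fin n) ℂ,
        (∀ i j : Fin n, j < i → (g : Matrix (Fin n) (Fin n) ℂ) i j = 0) ∧
        (∀ i, 1 ≤ i → i ≤ t →
          (Λ i).map (Matrix.mulVecLin (g : Matrix (Fin n) (Fin n) ℂ)) = Λ i) ∧
        W.1.map (Matrix.mulVecLin (g : Matrix (Fin n) (Fin n) ℂ)) = W'.1)) := by
  classical
  obtain ⟨P, htri, hPdet, hspanA⟩ := FlagOrbAux.exists_triangular_adapted hn t Λ hΛdim hΛmono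
  haveI : Invertible P := P.invertibleOfIsUnitDet hPdet
  have htri' : P⁻¹.BlockTriangular id := Matrix.blockTriangular_inv_of_blockTriangular htri
  have hPP : P * P⁻¹ = 1 := Matrix.mul_nonsing_inv P hPdet
  have hP'P : P⁻¹ * P = 1 := Matrix.nonsing_inv_mul P hPdet
  -- choose a spanning vector for each line
  have hrep : ∀ W : {W : Submodule ℂ (Fin n → ℂ) // Module.finrank ℂ ↥W = 1},
      ∃ w : Fin n → ℂ, w ≠ 0 ∧ W.1 = Submodule.span ℂ {w} := fun W => finrank_one_rep W.2
  set wv : {W : Submodule ℂ (Fin n → ℂ) // Module.finrank ℂ ↥W = 1} → (Fin n → ℂ) :=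
    fun W => (hrep W).choose with hwv
  have hwv1 : ∀ W, wv W ≠ 0 := fun W => (hrep W).choose_spec.1
  have hwv2 : ∀ W, W.1 = Submodule.span ℂ {wv W} := fun W => (hrep W).choose_spec.2
  set cv : {W : Submodule ℂ (Fin n → ℂ) // Module.finrank ℂ ↥W = 1} → (Fin n → ℂ) :=
    fun W => P⁻¹ *ᵥ wv W with hcv
  have hcv0 : ∀ W, cv W ≠ 0 := by
    intro W h0
    apply hwv1 W
    have : P *ᵥ (P⁻¹ *ᵥ wv W) = wv W := by
      rw [Matrix.mulVec_mulVec, hPP, Matrix.one_mulVec]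
    rw [← this, show P⁻¹ *ᵥ wv W = cv W from rfl, h0, Matrix.mulVec_zero]
  have hwc : ∀ W, P *ᵥ cv W = wv W := by
    intro W
    rw [hcv]
    rw [Matrix.mulVec_mulVec, hPP, Matrix.one_mulVec]
  set F : {W : Submodule ℂ (Fin n → ℂ) // Module.finrank ℂ ↥W = 1} → Finset (Fin n) :=
    fun W => Finset.univ.filter fun k => cv W k ≠ 0 with hF
  -- main step: equal support implies related
  have key : ∀ W W', F W = F W' →
      ∃ g : Matrix.SpecialLinearGroup (Fin n) ℂ,
        (∀ i j : Fin n, j < i → (g : Matrix (Fin n) (Fin n) ℂ) i j = 0) ∧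
        (∀ i, 1 ≤ i → i ≤ t →
          (Λ i).map (Matrix.mulVecLin (g : Matrix (Fin n) (Fin n) ℂ)) = Λ i) ∧
        W.1.map (Matrix.mulVecLin (g : Matrix (Fin n) (Fin n) ℂ)) = W'.1 := by
    intro W W' hFF
    set c := cv W
    set c' := cv W'
    have hsupp : ∀ k, c k ≠ 0 ↔ c' k ≠ 0 := by
      intro k
      have := Finset.ext_iff.mp hFF k
      simpa [hF] using this
    -- the scalar
    set z : ℂ := ∏ k ∈ F W, (c' k / c k) with hz
    have hzne : z ≠ 0 := by
      rw [hz]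
      refine Finset.prod_ne_zero_iff.mpr fun k hk => ?_
      have hck : c k ≠ 0 := by simpa [hF] using hk
      exact div_ne_zero ((hsupp k).mp hck) hck
    obtain ⟨μ, hμ⟩ := IsAlgClosed.exists_pow_nat_eq (k := ℂ) z⁻¹ hn
    have hμne : μ ≠ 0 := by
      intro h0
      rw [h0, zero_pow (by omega)] at hμ
      exact hzne (by simpa using hμ.symm)
    set d : Fin n → ℂ := fun k => μ * (if c k ≠ 0 then c' k / c k else 1) with hd
    have hdne : ∀ k, d k ≠ 0 := by
      intro k
      rw [hd]
      refine mul_ne_zero hμne ?_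
      split
      · next h => exact div_ne_zero ((hsupp k).mp h) h
      · exact one_ne_zero
    have hprod : ∏ k, d k = 1 := by
      rw [hd]
      rw [Finset.prod_mul_distrib, Finset.prod_const, Finset.card_univ, Fintype.card_fin]
      have : ∏ k, (if c k ≠ 0 then c' k / c k else 1) = z := by
        rw [hz, hF, Finset.prod_filter]
      rw [this, hμ, inv_mul_cancel₀ hzne]
    set D := Matrix.diagonal d with hD
    set g0 := P * D * P⁻¹ with hg0
    have hdetg0 : g0.det = 1 := by
      rw [hg0, Matrix.det_conj ((Matrix.isUnit_iff_isUnit_det P).mpr hPdet), hD, Matrix.det_diagonal, hprod]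
    have hg0col : ∀ k : Fin n, g0 *ᵥ (P *ᵥ Pi.single k 1) = d k • (P *ᵥ Pi.single k 1) := by
      intro k
      have hconj : g0 * P = P * D := by
        rw [hg0, mul_assoc (P * D), hP'P, mul_one]
      have hDs : D *ᵥ Pi.single k 1 = d k • (Pi.single k 1 : Fin n → ℂ) := by
        funext m
        rw [hD, Matrix.mulVec_diagonal]
        by_cases hmk : m = k <;> simp [hmk, Pi.single_apply]
      rw [Matrix.mulVec_mulVec, hconj, ← Matrix.mulVec_mulVec, hDs, Matrix.mulVec_smul]
    refine ⟨⟨g0, hdetg0⟩, ?_, ?_, ?_⟩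
    · intro i j hji
      exact (htri.mul (Matrix.blockTriangular_diagonal d)).mul htri' (show id j < id i from hji)
    · intro i h1i hit
      obtain ⟨A, hA⟩ := hspanA i h1i hit
      show (Λ i).map (Matrix.mulVecLin g0) = Λ i
      rw [hA, Submodule.map_span]
      refine le_antisymm (Submodule.span_le.mpr ?_) (Submodule.span_le.mpr ?_)
      · rintro x ⟨y, ⟨k, hk, rfl⟩, rfl⟩
        show Matrix.mulVecLin g0 (P *ᵥ Pi.single k 1) ∈ _
        rw [Matrix.mulVecLin_apply, hg0col k]
        exact Submodule.smul_mem _ _ (Submodule.subset_span ⟨k, hk, rfl⟩)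
      · rintro x ⟨k, hk, rfl⟩
        show P *ᵥ Pi.single k 1 ∈ _
        have hmem : d k • (P *ᵥ Pi.single k 1) ∈ Submodule.span ℂ
            (⇑(Matrix.mulVecLin g0) '' ((fun k => P *ᵥ Pi.single k 1) '' A)) := by
          rw [← hg0col k, ← Matrix.mulVecLin_apply]
          exact Submodule.subset_span ⟨P *ᵥ Pi.single k 1, ⟨k, hk, rfl⟩, rfl⟩
        have h2 := Submodule.smul_mem _ (d k)⁻¹ hmem
        rwa [inv_smul_smul₀ (hdne k)] at h2
    · show W.1.map (Matrix.mulVecLin g0) = W'.1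
      have hDc : D *ᵥ c = μ • c' := by
        funext k
        rw [hD, Matrix.mulVec_diagonal]
        simp only [hd]
        by_cases hck : c k ≠ 0
        · rw [if_pos hck, Pi.smul_apply, smul_eq_mul]
          field_simp
        · push_neg at hck
          have hck' : c' k = 0 := by
            by_contra h
            exact absurd ((hsupp k).mpr h) (by simp [hck])
          rw [if_neg (not_not_intro hck), Pi.smul_apply, smul_eq_mul, hck, hck']
          ring
      have hg0w : g0 *ᵥ wv W = μ • wv W' := by
        have hconj : g0 * P = P * D := by
          rw [hg0, mul_assoc (P * D), hP'P, mul_one]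
        rw [← hwc W, Matrix.mulVec_mulVec, hconj, ← Matrix.mulVec_mulVec, hDc,
          Matrix.mulVec_smul, hwc W']
      rw [hwv2 W, Submodule.map_span, Set.image_singleton, Matrix.mulVecLin_apply, hg0w,
        Submodule.span_singleton_smul_eq (isUnit_iff_ne_zero.mpr hμne), ← hwv2 W']
  -- conclude finiteness via the support invariant
  have hNE : Nonempty {W : Submodule ℂ (Fin n → ℂ) // Module.finrank ℂ ↥W = 1} := by
    refine ⟨⟨Submodule.span ℂ {Pi.single (⟨0, hn⟩ : Fin n) (1 : ℂ)}, ?_⟩⟩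
    refine finrank_span_singleton ?_
    intro h0
    have := congrFun h0 ⟨0, hn⟩
    simp at this
  refine Finite.of_surjective
    (fun A : Finset (Fin n) =>
      if hA : ∃ W, F W = A then Quot.mk _ hA.choose else Quot.mk _ hNE.some) ?_
  intro q
  obtain ⟨W, rfl⟩ := Quot.exists_rep q
  refine ⟨F W, ?_⟩
  have hA : ∃ W', F W' = F W := ⟨W, rfl⟩
  simp only [dif_pos hA]
  exact Quot.sound (key hA.choose W hA.choose_spec)
end

section
/- Let n be an even positive integer, V = ℂ^n, and ω a nondegenerate alternating bilinear form on V; for a subspace W ⊆ V let W^⊥ denote its ω-orthogonal complement. Let F_1 ⊂ ⋯ ⊂ F_{n/2} be subspaces with dim F_d = d such that F_{n/2} is isotropic (ω vanishes identically on F_{n/2} × F_{n/2}), and set F_0 = 0. Let 0 ≤ s ≤ k ≤ n/2, let 1 ≤ a_1 < ⋯ < a_s ≤ n/2 and 0 ≤ b_1 < ⋯ < b_{k−s} ≤ n/2 − 1 be integers, and let Λ ⊆ V be a k-dimensional isotropic subspace with dim(Λ ∩ F_{a_i}) = i for 1 ≤ i ≤ s and dim(Λ ∩ F_{b_j}^⊥)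 = k − j + 1 for 1 ≤ j ≤ k − s. Then every chain of subspaces Λ_1 ⊆ ⋯ ⊆ Λ_k = Λ with dim Λ_τ = τ for all τ, Λ_τ ⊆ F_{a_τ} for 1 ≤ τ ≤ s, and Λ_τ ⊆ F_{b_{k−τ+1}}^⊥ for s + 1 ≤ τ ≤ k satisfies Λ_τ = Λ ∩ F_{a_τ} for τ ≤ s and Λ_τ = Λ ∩ F_{b_{k−τ+1}}^⊥ for τ > s. -/
/-- The orthogonal complement `W^⊥ = {v | ω (v, w) = 0 for all w ∈ W}` of a subspace `W`
of `ℂ^n` with respect to a bilinear form `ω`. -/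
noncomputable def bilinPerp {n : ℕ} (ω : LinearMap.BilinForm ℂ (Fin n → ℂ))
    (W : Submodule ℂ (Fin n → ℂ)) : Submodule ℂ (Fin n → ℂ) where
  carrier := {v | ∀ w ∈ W, ω v w = 0}
  add_mem' := by
    intro a b ha hb w hw
    simp [map_add, ha w hw, hb w hw]
  zero_mem' := by
    intro w hw
    simp
  smul_mem' := by
    intro c v hv w hw
    simp [map_smul, hv w hw]

/-- **Uniqueness of the fiber of the resolution over the open Schubert cell of the
symplectic Grassmannian `SG(k, n)`.**  Let `ω` be a nondegenerate alternating bilinear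
form on `ℂ^n` (`n = 2m`), `F 1 ⊂ ⋯ ⊂ F m` an isotropic flag (`F 0 = 0`), and `Λ` a
`k`-dimensional isotropic subspace with `dim (Λ ⊓ F (a i)) = i` (`1 ≤ i ≤ s`) and
`dim (Λ ⊓ (F (b j))^⊥) = k − j + 1` (`1 ≤ j ≤ k − s`).  Then every chain
`L 1 ⊆ ⋯ ⊆ L k = Λ` with `dim (L τ) = τ`, `L τ ⊆ F (a τ)` for `τ ≤ s` and
`L τ ⊆ (F (b (k − τ + 1)))^⊥` for `τ > s` satisfies `L τ = Λ ⊓ F (a τ)` for `τ ≤ s`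
and `L τ = Λ ⊓ (F (b (k − τ + 1)))^⊥` for `τ > s`. -/
theorem symplectic_schubert_fiber_unique
    (n m k s : ℕ) (hm : 0 < m) (hn : n = 2 * m) (hs : s ≤ k) (hk : k ≤ m)
    (ω : LinearMap.BilinForm ℂ (Fin n → ℂ))
    (hnd : ω.Nondegenerate) (halt : ω.IsAlt)
    (F : ℕ → Submodule ℂ (Fin n → ℂ))
    (hF0 : F 0 = ⊥)
    (hFdim : ∀ d, 1 ≤ d → d ≤ m → Module.finrank ℂ ↥(F d) = d)
    (hFmono : ∀ d e, d ≤ e → e ≤ m → F d ≤ F e)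
    (hFiso : ∀ v ∈ F m, ∀ w ∈ F m, ω v w = 0)
    (a : ℕ → ℕ)
    (ha : ∀ i, 1 ≤ i → i ≤ s → 1 ≤ a i ∧ a i ≤ m)
    (hamono : ∀ i j, 1 ≤ i → i < j → j ≤ s → a i < a j)
    (b : ℕ → ℕ)
    (hb : ∀ j, 1 ≤ j → j ≤ k - s → b j ≤ m - 1)
    (hbmono : ∀ i j, 1 ≤ i → i < j → j ≤ k - s → b i < b j)
    (Λ : Submodule ℂ (Fin n → ℂ))
    (hΛ : Module.finrank ℂ ↥Λ = k)
    (hΛiso : ∀ v ∈ Λ, ∀ w ∈ Λ, ω v w = 0)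
    (hcellA : ∀ i, 1 ≤ i → i ≤ s → Module.finrank ℂ ↥(Λ ⊓ F (a i)) = i)
    (hcellB : ∀ j, 1 ≤ j → j ≤ k - s →
      Module.finrank ℂ ↥(Λ ⊓ bilinPerp ω (F (b j))) = k - j + 1)
    (L : ℕ → Submodule ℂ (Fin n → ℂ))
    (hLmono : ∀ t u, 1 ≤ t → t ≤ u → u ≤ k → L t ≤ L u)
    (hLk : L k = Λ)
    (hLdim : ∀ τ, 1 ≤ τ → τ ≤ k → Module.finrank ℂ ↥(L τ) = τ)
    (hLa : ∀ τ, 1 ≤ τ → τ ≤ s → L τ ≤ F (a τ))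
    (hLb : ∀ τ, s + 1 ≤ τ → τ ≤ k → L τ ≤ bilinPerp ω (F (b (k - τ + 1)))) :
    (∀ τ, 1 ≤ τ → τ ≤ s → L τ = Λ ⊓ F (a τ)) ∧
    (∀ τ, s + 1 ≤ τ → τ ≤ k → L τ = Λ ⊓ bilinPerp ω (F (b (k - τ + 1)))) := by
  have hΛle : ∀ τ, 1 ≤ τ → τ ≤ k → L τ ≤ Λ := fun τ h1 h2 => hLk ▸ hLmono τ k h1 h2 le_rfl
  constructor
  · intro τ h1 h2
    apply Submodule.eq_of_le_of_finrank_eq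
    · exact le_inf (hΛle τ h1 (h2.trans hs)) (hLa τ h1 h2)
    · rw [hLdim τ h1 (h2.trans hs), hcellA τ h1 h2]
  · intro τ h1 h2
    apply Submodule.eq_of_le_of_finrank_eq
    · exact le_inf (hΛle τ (by omega) h2) (hLb τ h1 h2)
    · rw [hLdim τ (by omega) h2, hcellB (k - τ + 1) (by omega) (by omega)]
      omega
end

section
/- Let n be an even positive integer, V = ℂ^n, and ω a nondegenerate alternating bilinear form on V; for a subspace W ⊆ V let W^⊥ denote its ω-orthogonal complement. Let F_1 ⊂ ⋯ ⊂ F_{n/2} be subspaces with dim F_d = d such that F_{n/2} is isotropic (ω vanishes identically on F_{n/2} × F_{n/2}), and set F_0 = 0. Let 0 ≤ s ≤ k ≤ n/2, let 1 ≤ a_1 < ⋯ < a_s ≤ n/2 and 0 ≤ b_1 < ⋯ < b_{k−s} ≤ n/2 − 1 be integers, and let Λ ⊆ V be a k-dimensional isotropic subspace with dim(Λ ∩ F_{a_i}) ≥ i for 1 ≤ i ≤ s and dim(Λ ∩ F_{b_j}^⊥) ≥ k − j + 1 for 1 ≤ j ≤ k − s. Then there exists a chain of subspaces Λ_1 ⊆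 ⋯ ⊆ Λ_k = Λ with dim Λ_τ = τ for all τ, Λ_τ ⊆ F_{a_τ} for 1 ≤ τ ≤ s, and Λ_τ ⊆ F_{b_{k−τ+1}}^⊥ for s + 1 ≤ τ ≤ k; in particular each Λ_τ is isotropic. -/
/-- Extending a subspace by one dimension inside an ambient subspace. -/
lemma exists_extend_one {n : ℕ} (W M : Submodule ℂ (Fin n → ℂ)) (hWM : W ≤ M) (t : ℕ)
    (hW : Module.finrank ℂ ↥W = t) (hM : t + 1 ≤ Module.finrank ℂ ↥M) :
    ∃ W' : Submodule ℂ (Fin n → ℂ), W ≤ W' ∧ W' ≤ M ∧ Module.finrank ℂ ↥W' = t + 1 := by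
  have hlt : W < M := Submodule.lt_of_le_of_finrank_lt_finrank hWM (by omega)
  obtain ⟨v, hvM, hvW⟩ := SetLike.exists_of_lt hlt
  have hv0 : v ≠ 0 := fun h => hvW (h ▸ W.zero_mem)
  refine ⟨W ⊔ Submodule.span ℂ {v}, le_sup_left, ?_, ?_⟩
  · exact sup_le hWM ((Submodule.span_singleton_le_iff_mem v M).mpr hvM)
  · have hdisj : Disjoint W (Submodule.span ℂ {v}) :=
      (Submodule.disjoint_span_singleton' hv0).mpr hvW
    have h := Submodule.finrank_sup_add_finrank_inf_eq W (Submodule.span ℂ {v})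
    rw [hdisj.eq_bot] at h
    simp only [finrank_bot, add_zero] at h
    rw [h, hW, finrank_span_singleton hv0]

/-- `bilinPerp` is antitone. -/
lemma bilinPerp_antitone {n : ℕ} (ω : LinearMap.BilinForm ℂ (Fin n → ℂ))
    {A B : Submodule ℂ (Fin n → ℂ)} (h : A ≤ B) : bilinPerp ω B ≤ bilinPerp ω A :=
  fun _ hv w hw => hv w (h hw)

/-- **Surjectivity of the resolution onto a Schubert variety of the symplectic
Grassmannian `SG(k, n)`.**  Let `ω` be a nondegenerate alternating bilinear form on
`ℂ^n` (`n = 2m`), `F 1 ⊂ ⋯ ⊂ F m` an isotropic flag (`F 0 = 0`), and `Λ` a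
`k`-dimensional isotropic subspace with `dim (Λ ⊓ F (a i)) ≥ i` (`1 ≤ i ≤ s`) and
`dim (Λ ⊓ (F (b j))^⊥) ≥ k − j + 1` (`1 ≤ j ≤ k − s`).  Then there exists a chain
`L 1 ⊆ ⋯ ⊆ L k = Λ` with `dim (L τ) = τ`, `L τ ⊆ F (a τ)` for `τ ≤ s` and
`L τ ⊆ (F (b (k − τ + 1)))^⊥` for `τ > s`; in particular each `L τ` is isotropic. -/
theorem symplectic_schubert_resolution_surjective
    (n m k s : ℕ) (hm : 0 < m) (hn : n = 2 * m) (hs : s ≤ k) (hk : k ≤ m)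
    (ω : LinearMap.BilinForm ℂ (Fin n → ℂ))
    (hnd : ω.Nondegenerate) (halt : ω.IsAlt)
    (F : ℕ → Submodule ℂ (Fin n → ℂ))
    (hF0 : F 0 = ⊥)
    (hFdim : ∀ d, 1 ≤ d → d ≤ m → Module.finrank ℂ ↥(F d) = d)
    (hFmono : ∀ d e, d ≤ e → e ≤ m → F d ≤ F e)
    (hFiso : ∀ v ∈ F m, ∀ w ∈ F m, ω v w = 0)
    (a : ℕ → ℕ)
    (ha : ∀ i, 1 ≤ i → i ≤ s → 1 ≤ a i ∧ a i ≤ m)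
    (hamono : ∀ i j, 1 ≤ i → i < j → j ≤ s → a i < a j)
    (b : ℕ → ℕ)
    (hb : ∀ j, 1 ≤ j → j ≤ k - s → b j ≤ m - 1)
    (hbmono : ∀ i j, 1 ≤ i → i < j → j ≤ k - s → b i < b j)
    (Λ : Submodule ℂ (Fin n → ℂ))
    (hΛ : Module.finrank ℂ ↥Λ = k)
    (hΛiso : ∀ v ∈ Λ, ∀ w ∈ Λ, ω v w = 0)
    (hcellA : ∀ i, 1 ≤ i → i ≤ s → i ≤ Module.finrank ℂ ↥(Λ ⊓ F (a i)))
    (hcellB : ∀ j, 1 ≤ j → j ≤ k - s →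
      k - j + 1 ≤ Module.finrank ℂ ↥(Λ ⊓ bilinPerp ω (F (b j)))) :
    ∃ L : ℕ → Submodule ℂ (Fin n → ℂ),
      (∀ t u, 1 ≤ t → t ≤ u → u ≤ k → L t ≤ L u) ∧
      L k = Λ ∧
      (∀ τ, 1 ≤ τ → τ ≤ k → Module.finrank ℂ ↥(L τ) = τ) ∧
      (∀ τ, 1 ≤ τ → τ ≤ s → L τ ≤ F (a τ)) ∧
      (∀ τ, s + 1 ≤ τ → τ ≤ k → L τ ≤ bilinPerp ω (F (b (k - τ + 1)))) ∧
      (∀ τ, 1 ≤ τ → τ ≤ k → ∀ v ∈ L τ, ∀ w ∈ L τ, ω v w = 0) := by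
  classical
  -- The monotone target family
  set M : ℕ → Submodule ℂ (Fin n → ℂ) := fun τ =>
    if τ ≤ s then Λ ⊓ F (a τ) else Λ ⊓ bilinPerp ω (F (b (k - τ + 1))) with hM
  have hMleΛ : ∀ τ, M τ ≤ Λ := by
    intro τ; by_cases h : τ ≤ s <;> simp [hM, h]
  have hFmPerp : ∀ d, d ≤ m → F m ≤ bilinPerp ω (F d) := by
    intro d hd v hv w hw
    exact hFiso v hv w (hFmono d m hd le_rfl hw)
  have hMs : ∀ τ, τ ≤ s → M τ = Λ ⊓ F (a τ) := by
    intro τ h; simp only [hM, if_pos h]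
  have hMb : ∀ τ, ¬ τ ≤ s → M τ = Λ ⊓ bilinPerp ω (F (b (k - τ + 1))) := by
    intro τ h; simp only [hM, if_neg h]
  have hMdim : ∀ τ, 1 ≤ τ → τ ≤ k → τ ≤ Module.finrank ℂ ↥(M τ) := by
    intro τ h1 h2
    by_cases h : τ ≤ s
    · rw [hMs τ h]; exact hcellA τ h1 h
    · have hj1 : 1 ≤ k - τ + 1 := by omega
      have hj2 : k - τ + 1 ≤ k - s := by omega
      have := hcellB (k - τ + 1) hj1 hj2
      have heq : k - (k - τ + 1) + 1 = τ := by omega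
      rw [heq] at this
      rw [hMb τ h]; exact this
  have hMmono : ∀ τ, 1 ≤ τ → τ + 1 ≤ k → M τ ≤ M (τ + 1) := by
    intro τ h1 h2
    by_cases hts : τ + 1 ≤ s
    · have haτ := ha τ h1 (by omega)
      have haτ1 := ha (τ + 1) (by omega) hts
      have : F (a τ) ≤ F (a (τ + 1)) :=
        hFmono _ _ (le_of_lt (hamono τ (τ + 1) h1 (by omega) hts)) haτ1.2
      rw [hMs τ (by omega), hMs (τ + 1) hts]
      exact inf_le_inf_left _ this
    · by_cases hτs : τ ≤ s
      · -- τ = s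
        have hbj : b (k - (τ + 1) + 1) ≤ m - 1 := hb _ (by omega) (by omega)
        have haτ := ha τ h1 hτs
        have : F (a τ) ≤ bilinPerp ω (F (b (k - (τ + 1) + 1))) :=
          le_trans (hFmono _ m haτ.2 le_rfl) (hFmPerp _ (by omega))
        rw [hMs τ hτs, hMb (τ + 1) hts]
        exact inf_le_inf_left _ this
      · -- both beyond s
        have hlt : b (k - (τ + 1) + 1) < b (k - τ + 1) :=
          hbmono _ _ (by omega) (by omega) (by omega)
        have hbj : b (k - τ + 1) ≤ m - 1 := hb _ (by omega) (by omega)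
        have hF : F (b (k - (τ + 1) + 1)) ≤ F (b (k - τ + 1)) :=
          hFmono _ _ (le_of_lt hlt) (by omega)
        rw [hMb τ hτs, hMb (τ + 1) hts]
        exact inf_le_inf_left _ (bilinPerp_antitone ω hF)
  -- Build the chain by induction
  have key : ∀ t, t ≤ k → ∃ L : ℕ → Submodule ℂ (Fin n → ℂ),
      L 0 = ⊥ ∧
      (∀ u v, u ≤ v → v ≤ t → L u ≤ L v) ∧
      (∀ τ, τ ≤ t → Module.finrank ℂ ↥(L τ) = τ) ∧
      (∀ τ, 1 ≤ τ → τ ≤ t → L τ ≤ M τ) := by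
    intro t
    induction t with
    | zero =>
      intro _
      exact ⟨fun _ => ⊥, rfl, fun u v hu hv => le_rfl,
        fun τ hτ => by interval_cases τ; simp, fun τ h1 h2 => by omega⟩
    | succ t ih =>
      intro ht
      obtain ⟨L, hL0, hLmono, hLdim, hLsub⟩ := ih (by omega)
      have hLtM : L t ≤ M (t + 1) := by
        rcases Nat.eq_zero_or_pos t with h | h
        · rw [h, hL0]; exact bot_le
        · exact le_trans (hLsub t h le_rfl) (hMmono t h ht)
      obtain ⟨W', hW1, hW2, hW3⟩ := exists_extend_one (L t) (M (t + 1)) hLtM t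
        (hLdim t le_rfl) (hMdim (t + 1) (by omega) ht)
      set L' : ℕ → Submodule ℂ (Fin n → ℂ) := fun τ => if τ ≤ t then L τ else W' with hL'
      have hL'eq : ∀ τ, τ ≤ t → L' τ = L τ := by
        intro τ h; simp only [hL', if_pos h]
      have hL'eq2 : ∀ τ, ¬ τ ≤ t → L' τ = W' := by
        intro τ h; simp only [hL', if_neg h]
      refine ⟨L', by rw [hL'eq 0 (by omega)]; exact hL0, ?_, ?_, ?_⟩
      · intro u v huv hv
        by_cases hvt : v ≤ t
        · rw [hL'eq v hvt, hL'eq u (le_trans huv hvt)]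
          exact hLmono u v huv hvt
        · rw [hL'eq2 v hvt]
          by_cases hut : u ≤ t
          · rw [hL'eq u hut]
            exact le_trans (hLmono u t hut le_rfl) hW1
          · rw [hL'eq2 u hut]
      · intro τ hτ
        by_cases hτt : τ ≤ t
        · rw [hL'eq τ hτt]; exact hLdim τ hτt
        · have heq : τ = t + 1 := by omega
          rw [hL'eq2 τ hτt, hW3, heq]
      · intro τ h1 h2
        by_cases hτt : τ ≤ t
        · rw [hL'eq τ hτt]; exact hLsub τ h1 hτt
        · have heq : τ = t + 1 := by omega
          rw [hL'eq2 τ hτt, heq]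
          exact hW2
  obtain ⟨L, hL0, hLmono, hLdim, hLsub⟩ := key k le_rfl
  have hLk : ∀ τ, 1 ≤ τ → τ ≤ k → L τ ≤ Λ := fun τ h1 h2 =>
    le_trans (hLsub τ h1 h2) (hMleΛ τ)
  have hLkΛ : L k = Λ := by
    rcases Nat.eq_zero_or_pos k with h | h
    · subst h
      rw [hL0]
      exact (Submodule.finrank_eq_zero.mp hΛ).symm
    · exact Submodule.eq_of_le_of_finrank_eq (hLk k h le_rfl)
        (by rw [hLdim k le_rfl, hΛ])
  refine ⟨L, fun t u h1 h2 h3 => hLmono t u h2 h3, hLkΛ,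
    fun τ h1 h2 => hLdim τ h2, ?_, ?_, ?_⟩
  · intro τ h1 h2
    have := hLsub τ h1 (le_trans h2 hs)
    rw [hMs τ h2] at this
    exact le_trans this inf_le_right
  · intro τ h1 h2
    have := hLsub τ (by omega) h2
    rw [hMb τ (by omega)] at this
    exact le_trans this inf_le_right
  · intro τ h1 h2 v hv w hw
    exact hΛiso v (hLk τ h1 h2 hv) w (hLk τ h1 h2 hw)
end

section
/- Let n be a positive integer and let B be the group of invertible upper-triangular n×n complex matrices (g i j = 0 whenever i > j). Fix integers 1 ≤ i₀ ≤ m ≤ n. Then the action of B on the set of tuples (V_1, …, V_m, L) of subspaces of ℂ^n satisfying V_1 ⊆ V_2 ⊆ ⋯ ⊆ V_m, dim V_i = i for 1 ≤ i ≤ m, dim L = 1, and L ⊆ V_{i₀} — where g ∈ B acts by sending each subspace to its image — has only finitely many orbits. -/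
open Submodule Matrix Set


lemma key_step {n : ℕ} (W W' : Submodule ℂ (Fin n → ℂ)) (hle : W ≤ W')
    (P : Set (Fin n))
    (hP : ∀ q ∈ P, ∃ w ∈ W, w q ≠ 0 ∧ ∀ j, q < j → w j = 0)
    (x : Fin n → ℂ) (hx : x ∈ W') (hxW : x ∉ W) :
    ∃ y ∈ W', y ∉ W ∧ ∃ q : Fin n, q ∉ P ∧ y q ≠ 0 ∧ ∀ j, q < j → y j = 0 := by
  suffices H : ∀ t : ℕ, ∀ x : Fin n → ℂ, x ∈ W' → x ∉ W → (∀ j : Fin n, t ≤ (j : ℕ) → x j = 0) →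
      ∃ y ∈ W', y ∉ W ∧ ∃ q : Fin n, q ∉ P ∧ y q ≠ 0 ∧ ∀ j, q < j → y j = 0 by
    exact H n x hx hxW (fun j hj => absurd j.isLt (by omega))
  intro t
  induction t with
  | zero =>
    intro x hx hxW h0
    exact absurd (show x = 0 from funext fun j => h0 j (Nat.zero_le _)) (by
      intro hx0; exact hxW (hx0 ▸ W.zero_mem))
  | succ t ih =>
    intro x hx hxW hsupp
    by_cases ht : t < n
    · set jt : Fin n := ⟨t, ht⟩ with hjt
      by_cases hxt : x jt = 0
      · refine ih x hx hxW ?_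
        intro j hj
        rcases eq_or_lt_of_le hj with h | h
        · have : j = jt := by apply Fin.ext; simp only [hjt, Fin.val_mk]; omega
          rw [this]; exact hxt
        · exact hsupp j (by omega)
      · by_cases hjP : jt ∈ P
        · obtain ⟨w, hwW, hwq, hwj⟩ := hP jt hjP
          set y : Fin n → ℂ := x - (x jt / w jt) • w with hy
          have hyW' : y ∈ W' := W'.sub_mem hx (W'.smul_mem _ (hle hwW))
          have hyW : y ∉ W := by
            intro hyW
            apply hxW
            have : x = y + (x jt / w jt) • w := by rw [hy]; module
            rw [this]; exact W.add_mem hyW (W.smul_mem _ hwW)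
          refine ih y hyW' hyW ?_
          intro j hj
          rcases eq_or_lt_of_le hj with h | h
          · have hj' : j = jt := by apply Fin.ext; simp only [hjt, Fin.val_mk]; omega
            subst hj'
            simp only [hy, Pi.sub_apply, Pi.smul_apply, smul_eq_mul]
            field_simp
            ring
          · have hj1 : (jt : ℕ) < (j : ℕ) := by simp only [hjt, Fin.val_mk]; omega
            simp only [hy, Pi.sub_apply, Pi.smul_apply, smul_eq_mul]
            rw [hsupp j (by omega), hwj j (by exact hj1)]
            ring
        · exact ⟨x, hx, hxW, jt, hjP, hxt, fun j hj => hsupp j (by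
            simp only [Fin.lt_def, hjt, Fin.val_mk] at hj; omega)⟩
    · refine ih x hx hxW fun j hj => hsupp j (by omega)

lemma echelon {n m : ℕ} (hmn : m ≤ n) (V : Fin m → Submodule ℂ (Fin n → ℂ))
    (hmono : ∀ i j : Fin m, i ≤ j → V i ≤ V j)
    (hdim : ∀ i : Fin m, Module.finrank ℂ (V i) = (i : ℕ) + 1) :
    ∃ (v : Fin m → (Fin n → ℂ)) (p : Fin m → Fin n),
      Function.Injective p ∧
      (∀ a, v a (p a) ≠ 0) ∧
      (∀ a j, p a < j → v a j = 0) ∧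
      (∀ i : Fin m, V i = span ℂ (v '' {a | a ≤ i})) := by
  suffices H : ∀ k : ℕ, k ≤ m → ∃ (v : Fin m → (Fin n → ℂ)) (p : Fin m → Fin n),
      (∀ a b : Fin m, (a : ℕ) < k → (b : ℕ) < k → p a = p b → a = b) ∧
      (∀ a : Fin m, (a : ℕ) < k → v a (p a) ≠ 0) ∧
      (∀ (a : Fin m) (j : Fin n), (a : ℕ) < k → p a < j → v a j = 0) ∧
      (∀ i : Fin m, (i : ℕ) < k → V i = span ℂ (v '' {a | a ≤ i})) by
    obtain ⟨v, p, h1, h2, h3, h4⟩ := H m le_rfl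
    exact ⟨v, p, fun a b hab => h1 a b a.isLt b.isLt hab,
      fun a => h2 a a.isLt, fun a j => h3 a j a.isLt, fun i => h4 i i.isLt⟩
  intro k
  induction k with
  | zero =>
    intro _
    exact ⟨fun _ _ => 0, fun a => ⟨0, Nat.lt_of_lt_of_le (Nat.zero_lt_of_lt a.isLt) hmn⟩, fun a b h => absurd h (by omega),
      fun a h => absurd h (by omega), fun a j h => absurd h (by omega),
      fun i h => absurd h (by omega)⟩
  | succ k ih =>
    intro hk
    obtain ⟨v, p, hinj, hnz, hvan, hspan⟩ := ih (by omega)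
    set km : Fin m := ⟨k, by omega⟩ with hkm
    set W : Submodule ℂ (Fin n → ℂ) := span ℂ (v '' {a | (a : ℕ) < k}) with hW
    have hmemW : ∀ a : Fin m, (a : ℕ) < k → v a ∈ W := fun a ha =>
      subset_span ⟨a, ha, rfl⟩
    have hmemV : ∀ a : Fin m, (a : ℕ) < k → v a ∈ V km := by
      intro a ha
      have h1 : v a ∈ V a := by
        rw [hspan a ha]
        exact subset_span ⟨a, le_refl a, rfl⟩
      exact hmono a km (by simp [hkm, Fin.le_def]; omega) h1
    have hWle : W ≤ V km := by
      rw [hW, span_le]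
      rintro - ⟨a, ha, rfl⟩
      exact hmemV a ha
    have hWrank : Module.finrank ℂ W = k := by
      rcases Nat.eq_zero_or_pos k with h0 | hpos
      · subst h0
        have : {a : Fin m | (a : ℕ) < 0} = ∅ := by ext a; simp
        rw [hW, this, Set.image_empty, span_empty, finrank_bot]
      · set i' : Fin m := ⟨k - 1, by omega⟩ with hi'
        have hset : {a : Fin m | a ≤ i'} = {a : Fin m | (a : ℕ) < k} := by
          ext a; simp [Fin.le_def, hi']; omega
        have : W = V i' := by rw [hW, ← hset, ← hspan i' (by simp [hi']; omega)]
        rw [this, hdim i']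
        simp [hi']; omega
    have hlt : W < V km := by
      rcases lt_or_eq_of_le hWle with h | h
      · exact h
      · exfalso
        have := hdim km
        rw [← h, hWrank] at this
        simp [hkm] at this
    obtain ⟨x, hx, hxW⟩ := SetLike.exists_of_lt hlt
    obtain ⟨y, hyV, hyW, q, hqP, hyq, hyvan⟩ := key_step W (V km) hWle
      (p '' {a | (a : ℕ) < k})
      (by rintro - ⟨a, ha, rfl⟩; exact ⟨v a, hmemW a ha, hnz a ha, fun j hj => hvan a j ha hj⟩)
      x hx hxW
    refine ⟨Function.update v km y, Function.update p km q, ?_, ?_, ?_, ?_⟩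
    · intro a b ha hb hab
      have hcase : ∀ c : Fin m, (c : ℕ) < k + 1 → c = km ∨ (c : ℕ) < k := by
        intro c hc
        rcases Nat.lt_or_ge (c : ℕ) k with h | h
        · exact Or.inr h
        · exact Or.inl (Fin.ext (by simp [hkm]; omega))
      rcases hcase a ha with rfl | ha' <;> rcases hcase b hb with rfl | hb'
      · rfl
      · exfalso
        rw [Function.update_self, Function.update_of_ne (by
          intro h; rw [h] at hb'; simp [hkm] at hb')] at hab
        exact hqP ⟨b, hb', hab.symm⟩
      · exfalso
        rw [Function.update_self, Function.update_of_ne (by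
          intro h; rw [h] at ha'; simp [hkm] at ha')] at hab
        exact hqP ⟨a, ha', hab⟩
      · have hane : a ≠ km := by intro h; rw [h] at ha'; simp [hkm] at ha'
        have hbne : b ≠ km := by intro h; rw [h] at hb'; simp [hkm] at hb'
        rw [Function.update_of_ne hane, Function.update_of_ne hbne] at hab
        exact hinj a b ha' hb' hab
    · intro a ha
      rcases Nat.lt_or_ge (a : ℕ) k with h | h
      · have hane : a ≠ km := by intro hh; rw [hh] at h; simp [hkm] at h
        rw [Function.update_of_ne hane, Function.update_of_ne hane]
        exact hnz a h
      · have : a = km := Fin.ext (by simp [hkm]; omega)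
        subst this
        rw [Function.update_self, Function.update_self]
        exact hyq
    · intro a j ha hj
      rcases Nat.lt_or_ge (a : ℕ) k with h | h
      · have hane : a ≠ km := by intro hh; rw [hh] at h; simp [hkm] at h
        rw [Function.update_of_ne hane] at hj ⊢
        exact hvan a j h hj
      · have : a = km := Fin.ext (by simp [hkm]; omega)
        subst this
        rw [Function.update_self] at hj ⊢
        exact hyvan j hj
    · intro i hi
      rcases Nat.lt_or_ge (i : ℕ) k with h | h
      · have himg : Function.update v km y '' {a | a ≤ i} = v '' {a | a ≤ i} := by
          apply Set.image_congr
          intro a ha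
          have : a ≠ km := by
            intro hh; rw [hh] at ha
            simp only [Set.mem_setOf_eq, Fin.le_def, hkm] at ha
            omega
          exact Function.update_of_ne this _ _
        rw [himg]
        exact hspan i h
      · have hikm : i = km := Fin.ext (by simp [hkm]; omega)
        subst hikm
        have hsets : {a : Fin m | a ≤ km} = {a : Fin m | (a : ℕ) < k} ∪ {km} := by
          ext a
          simp only [Set.mem_setOf_eq, Set.mem_union, Set.mem_singleton_iff, Fin.le_def,
            Fin.ext_iff, hkm]
          omega
        have himg : Function.update v km y '' {a : Fin m | a ≤ km}
            = v '' {a | (a : ℕ) < k} ∪ {y} := by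
          rw [hsets, Set.image_union, Set.image_singleton, Function.update_self]
          congr 1
          apply Set.image_congr
          intro a ha
          have : a ≠ km := by
            intro hh; rw [hh] at ha; simp [hkm] at ha
          exact Function.update_of_ne this _ _
        rw [himg, span_union, ← hW]
        have hle2 : W ⊔ span ℂ {y} ≤ V km :=
          sup_le hWle ((span_singleton_le_iff_mem y (V km)).2 hyV)
        have hltW : W < W ⊔ span ℂ {y} := by
          rcases lt_or_eq_of_le (le_sup_left : W ≤ W ⊔ span ℂ {y}) with hh | hh
          · exact hh
          · exfalso
            apply hyW
            rw [hh]
            exact Submodule.mem_sup_right (mem_span_singleton_self y)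
        have hrk : k < Module.finrank ℂ ↥(W ⊔ span ℂ {y}) := by
          rw [← hWrank]
          exact Submodule.finrank_lt_finrank_of_lt hltW
        have := Submodule.eq_of_le_of_finrank_le hle2 (by
          rw [hdim km]; simp only [hkm, Fin.val_mk]; omega)
        exact this.symm

section Canon
variable {n m : ℕ}

/-- Canonical flag member: span of coordinate vectors `e_{p a}` for `a ≤ i`. -/
noncomputable def canonV (p : Fin m → Fin n) (i : Fin m) : Submodule ℂ (Fin n → ℂ) :=
  span ℂ ((fun a => (Pi.single (p a) 1 : Fin n → ℂ)) '' {a | a ≤ i})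

/-- Canonical line: span of the sum of the coordinate vectors indexed by `S`. -/
noncomputable def canonL (p : Fin m → Fin n) (S : Finset (Fin m)) : Submodule ℂ (Fin n → ℂ) :=
  span ℂ {∑ a ∈ S, (Pi.single (p a) (1 : ℂ) : Fin n → ℂ)}

lemma canonV_mono (p : Fin m → Fin n) (i j : Fin m) (hij : i ≤ j) :
    canonV p i ≤ canonV p j :=
  span_mono (Set.image_mono fun a (ha : a ≤ i) => le_trans ha hij)

lemma canonV_finrank (p : Fin m → Fin n) (hp : Function.Injective p) (i : Fin m) :
    Module.finrank ℂ (canonV p i) = (i : ℕ) + 1 := by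
  have h : (i : ℕ) + 1 ≤ m := i.isLt
  have hset : {a : Fin m | a ≤ i} = Set.range (Fin.castLE h) := by
    rw [Fin.range_castLE]
    ext a
    simp only [Set.mem_setOf_eq, Fin.le_def]
    omega
  have himg : (fun a => (Pi.single (p a) 1 : Fin n → ℂ)) '' {a | a ≤ i}
      = Set.range (fun b : Fin ((i : ℕ) + 1) =>
          (Pi.single (p (Fin.castLE h b)) 1 : Fin n → ℂ)) := by
    rw [hset, ← Set.range_comp]
    rfl
  have hfam : LinearIndependent ℂ (fun b : Fin ((i : ℕ) + 1) =>
      (Pi.single (p (Fin.castLE h b)) 1 : Fin n → ℂ)) := by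
    have : (fun b : Fin ((i : ℕ) + 1) => (Pi.single (p (Fin.castLE h b)) 1 : Fin n → ℂ))
        = ⇑(Pi.basisFun ℂ (Fin n)) ∘ (p ∘ Fin.castLE h) := by
      funext b
      simp [Pi.basisFun_apply]
    rw [this]
    exact (Pi.basisFun ℂ (Fin n)).linearIndependent.comp _
      (hp.comp (Fin.castLE_injective h))
  rw [canonV, himg, finrank_span_eq_card hfam]
  simp

lemma canonL_sum_apply (p : Fin m → Fin n) (hp : Function.Injective p)
    (S : Finset (Fin m)) (a₀ : Fin m) (ha₀ : a₀ ∈ S) :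
    (∑ a ∈ S, (Pi.single (p a) (1 : ℂ) : Fin n → ℂ)) (p a₀) = 1 := by
  rw [Finset.sum_apply]
  rw [Finset.sum_eq_single a₀]
  · simp
  · intro a ha hne
    rw [Pi.single_apply, if_neg (fun hh => hne (hp hh.symm))]
  · intro h; exact absurd ha₀ h

lemma canonL_ne_zero (p : Fin m → Fin n) (hp : Function.Injective p)
    (S : Finset (Fin m)) (hS : S.Nonempty) :
    (∑ a ∈ S, (Pi.single (p a) (1 : ℂ) : Fin n → ℂ)) ≠ 0 := by
  obtain ⟨a₀, ha₀⟩ := hS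
  intro h
  have := canonL_sum_apply p hp S a₀ ha₀
  rw [h] at this
  simp at this

lemma canonL_finrank (p : Fin m → Fin n) (hp : Function.Injective p)
    (S : Finset (Fin m)) (hS : S.Nonempty) :
    Module.finrank ℂ (canonL p S) = 1 :=
  finrank_span_singleton (canonL_ne_zero p hp S hS)

lemma canonL_le (p : Fin m → Fin n) (S : Finset (Fin m)) (i : Fin m)
    (hS : ∀ a ∈ S, a ≤ i) : canonL p S ≤ canonV p i := by
  rw [canonL, span_le, Set.singleton_subset_iff]
  exact sum_mem fun a ha => subset_span ⟨a, hS a ha, rfl⟩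

end Canon
lemma exists_upper_unit {n m : ℕ} (p : Fin m → Fin n) (hp : Function.Injective p)
    (w : Fin m → (Fin n → ℂ)) (hnz : ∀ a, w a (p a) ≠ 0)
    (hvan : ∀ a j, p a < j → w a j = 0) :
    ∃ g : (Matrix (Fin n) (Fin n) ℂ)ˣ,
      (∀ i j : Fin n, j < i → (g : Matrix (Fin n) (Fin n) ℂ) i j = 0) ∧
      ∀ a, Matrix.mulVecLin (g : Matrix (Fin n) (Fin n) ℂ) (Pi.single (p a) 1) = w a := by
  classical
  set M : Matrix (Fin n) (Fin n) ℂ :=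
    Matrix.of (fun i j => if h : ∃ a, p a = j then w h.choose i else if i = j then 1 else 0)
    with hM
  have hMcol : ∀ (a : Fin m) (i : Fin n), M i (p a) = w a i := by
    intro a i
    have hex : ∃ b, p b = p a := ⟨a, rfl⟩
    have hch : hex.choose = a := hp hex.choose_spec
    simp only [hM, Matrix.of_apply, dif_pos hex, hch]
  have htri : M.BlockTriangular id := by
    intro i j hij
    by_cases h : ∃ a, p a = j
    · have hMe : M i j = w h.choose i := by simp only [hM, Matrix.of_apply, dif_pos h]
      rw [hMe]
      exact hvan h.choose i (by rw [h.choose_spec]; exact hij)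
    · have hne : i ≠ j := fun hh => absurd hij (by rw [hh]; exact lt_irrefl _)
      simp only [hM, Matrix.of_apply, dif_neg h, if_neg hne]
  have hdiag : ∀ j, M j j ≠ 0 := by
    intro j
    by_cases h : ∃ a, p a = j
    · have hMe : M j j = w h.choose j := by simp only [hM, Matrix.of_apply, dif_pos h]
      rw [hMe]
      have := hnz h.choose
      rwa [h.choose_spec] at this
    · simp only [hM, Matrix.of_apply, dif_neg h, if_pos rfl]
      exact one_ne_zero
  have hdet : IsUnit M.det := by
    rw [Matrix.det_of_upperTriangular htri]
    exact isUnit_iff_ne_zero.2 (Finset.prod_ne_zero_iff.2 fun j _ => hdiag j)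
  have hMu : IsUnit M := (Matrix.isUnit_iff_isUnit_det M).2 hdet
  refine ⟨hMu.unit, ?_, ?_⟩
  · intro i j hij
    rw [IsUnit.unit_spec]
    exact htri hij
  · intro a
    rw [IsUnit.unit_spec]
    funext i
    show (M *ᵥ Pi.single (p a) 1) i = w a i
    simp only [Matrix.mulVec_single, MulOpposite.op_one, one_smul]
    exact hMcol a i

lemma idx_lt_aux {m i₀ : ℕ} (hi₀ : 1 ≤ i₀) (him : i₀ ≤ m) : i₀ - 1 < m := by omega

noncomputable def canonElt (n m i₀ : ℕ) (hi₀ : 1 ≤ i₀) (him : i₀ ≤ m) (hmn : m ≤ n)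
    (p : Fin m → Fin n) (S : Finset (Fin m))
    (h : Function.Injective p ∧ S.Nonempty ∧ ∀ a ∈ S, (a : ℕ) < i₀) :
    {pp : (Fin m → Submodule ℂ (Fin n → ℂ)) × Submodule ℂ (Fin n → ℂ) //
      (∀ i j : Fin m, i ≤ j → pp.1 i ≤ pp.1 j) ∧
      (∀ i : Fin m, Module.finrank ℂ ↥(pp.1 i) = (i : ℕ) + 1) ∧
      Module.finrank ℂ ↥pp.2 = 1 ∧
      pp.2 ≤ pp.1 ⟨i₀ - 1, idx_lt_aux hi₀ him⟩} :=
  ⟨(canonV p, canonL p S),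
    fun i j hij => canonV_mono p i j hij,
    canonV_finrank p h.1,
    canonL_finrank p h.1 S h.2.1,
    canonL_le p S ⟨i₀ - 1, idx_lt_aux hi₀ him⟩ (fun a ha => by
      have := h.2.2 a ha
      simp only [Fin.le_def]
      omega)⟩


lemma exists_canon_data {n m i₀ : ℕ} (hi₀ : 1 ≤ i₀) (him : i₀ ≤ m) (hmn : m ≤ n)
    (V : Fin m → Submodule ℂ (Fin n → ℂ)) (L : Submodule ℂ (Fin n → ℂ))
    (hmono : ∀ i j : Fin m, i ≤ j → V i ≤ V j)
    (hdim : ∀ i : Fin m, Module.finrank ℂ ↥(V i) = (i : ℕ) + 1)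
    (hL1 : Module.finrank ℂ ↥L = 1)
    (hLle : L ≤ V ⟨i₀ - 1, idx_lt_aux hi₀ him⟩) :
    ∃ (p : Fin m → Fin n) (S : Finset (Fin m)),
      Function.Injective p ∧ S.Nonempty ∧ (∀ a ∈ S, (a : ℕ) < i₀) ∧
      ∃ g : (Matrix (Fin n) (Fin n) ℂ)ˣ,
        (∀ i j : Fin n, j < i → (g : Matrix (Fin n) (Fin n) ℂ) i j = 0) ∧
        (∀ i : Fin m,
          (canonV p i).map (Matrix.mulVecLin (g : Matrix (Fin n) (Fin n) ℂ)) = V i) ∧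
        (canonL p S).map (Matrix.mulVecLin (g : Matrix (Fin n) (Fin n) ℂ)) = L := by
  classical
  obtain ⟨v, p, hpinj, hnz, hvan, hspan⟩ := echelon hmn V hmono hdim
  have hLbot : L ≠ ⊥ := by
    intro h
    rw [h] at hL1
    simp at hL1
  obtain ⟨u, huL, hune⟩ := Submodule.exists_mem_ne_zero_of_ne_bot hLbot
  have hLspan : L = span ℂ {u} :=
    (Submodule.eq_of_le_of_finrank_le ((span_singleton_le_iff_mem u _).2 huL)
      (by rw [hL1, finrank_span_singleton hune])).symm
  have hvinj : Function.Injective v := by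
    intro a b hab
    by_contra hne
    have hpne : p a ≠ p b := fun h => hne (hpinj h)
    rcases lt_or_gt_of_ne hpne with h | h
    · have h1 := hvan a (p b) h
      rw [hab] at h1
      exact hnz b h1
    · have h1 := hvan b (p a) h
      rw [← hab] at h1
      exact hnz a h1
  have huV : u ∈ V ⟨i₀ - 1, by omega⟩ := hLle huL
  rw [hspan ⟨i₀ - 1, by omega⟩] at huV
  have hsetfin : v '' {a | a ≤ (⟨i₀ - 1, by omega⟩ : Fin m)}
      = ↑((Finset.Iic (⟨i₀ - 1, by omega⟩ : Fin m)).image v) := by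
    rw [Finset.coe_image, Finset.coe_Iic]
    rfl
  rw [hsetfin] at huV
  obtain ⟨c, -, hc⟩ := mem_span_finset.1 huV
  rw [Finset.sum_image (fun a _ b _ hab => hvinj hab)] at hc
  set d : Fin m → ℂ := fun a =>
    if a ∈ Finset.Iic (⟨i₀ - 1, by omega⟩ : Fin m) then c (v a) else 0 with hd
  have hu1 : ∑ a ∈ Finset.Iic (⟨i₀ - 1, by omega⟩ : Fin m), d a • v a = u := by
    rw [← hc]
    exact Finset.sum_congr rfl fun a ha => by rw [hd]; simp only [if_pos ha]
  set S : Finset (Fin m) := Finset.univ.filter (fun a => d a ≠ 0) with hS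
  have hSsub : S ⊆ Finset.Iic (⟨i₀ - 1, by omega⟩ : Fin m) := by
    intro a ha
    rw [hS, Finset.mem_filter] at ha
    by_contra hcon
    exact ha.2 (by rw [hd]; simp only [if_neg hcon])
  have hu2 : ∑ a ∈ S, d a • v a = u := by
    rw [← hu1]
    exact (Finset.sum_subset hSsub fun a _ ha => by
      rw [hS, Finset.mem_filter] at ha
      push_neg at ha
      have : d a = 0 := by
        by_contra hcon
        exact hcon (ha (Finset.mem_univ a))
      rw [this, zero_smul])
  have hSne : S.Nonempty := by
    rw [Finset.nonempty_iff_ne_empty]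
    intro h
    rw [h, Finset.sum_empty] at hu2
    exact hune hu2.symm
  have hSlt : ∀ a ∈ S, (a : ℕ) < i₀ := by
    intro a ha
    have := hSsub ha
    rw [Finset.mem_Iic, Fin.le_def] at this
    have h2 : (a : ℕ) ≤ i₀ - 1 := this
    omega
  have hdS : ∀ a ∈ S, d a ≠ 0 := fun a ha => (Finset.mem_filter.1 ha).2
  set c' : Fin m → ℂ := fun a => if a ∈ S then d a else 1 with hc'
  have hc'nz : ∀ a, c' a ≠ 0 := by
    intro a
    rw [hc']
    by_cases h : a ∈ S
    · simp only [if_pos h]; exact hdS a h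
    · simp only [if_neg h]; exact one_ne_zero
  set w : Fin m → (Fin n → ℂ) := fun a => c' a • v a with hw
  have hw_nz : ∀ a, w a (p a) ≠ 0 := fun a => by
    rw [hw]
    simp only [Pi.smul_apply, smul_eq_mul]
    exact mul_ne_zero (hc'nz a) (hnz a)
  have hw_van : ∀ a j, p a < j → w a j = 0 := fun a j hj => by
    rw [hw]
    simp only [Pi.smul_apply, smul_eq_mul]
    rw [hvan a j hj, mul_zero]
  have hw_u : ∑ a ∈ S, w a = u := by
    rw [← hu2]
    exact Finset.sum_congr rfl fun a ha => by
      rw [hw, hc']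
      simp only [if_pos ha]
  have hw_span : ∀ i : Fin m, V i = span ℂ (w '' {a | a ≤ i}) := by
    have key : ∀ s : Set (Fin m), span ℂ (w '' s) = span ℂ (v '' s) := by
      intro s
      apply le_antisymm
      · rw [span_le]
        rintro - ⟨a, ha, rfl⟩
        exact Submodule.smul_mem _ _ (subset_span ⟨a, ha, rfl⟩)
      · rw [span_le]
        rintro - ⟨a, ha, rfl⟩
        have hv : v a = (c' a)⁻¹ • w a := by
          rw [hw, smul_smul, inv_mul_cancel₀ (hc'nz a), one_smul]
        rw [hv]
        exact Submodule.smul_mem _ _ (subset_span ⟨a, ha, rfl⟩)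
    intro i
    rw [hspan i, key]
  obtain ⟨g, hgtri, hgcol⟩ := exists_upper_unit p hpinj w hw_nz hw_van
  refine ⟨p, S, hpinj, hSne, hSlt, g, hgtri, ?_, ?_⟩
  · intro i
    rw [canonV]
    rw [Submodule.map_span, Set.image_image]
    have himg : (fun a => Matrix.mulVecLin (g : Matrix (Fin n) (Fin n) ℂ)
        (Pi.single (p a) 1)) = w := funext hgcol
    rw [himg, ← hw_span i]
  · rw [canonL]
    rw [Submodule.map_span, Set.image_singleton]
    have hsum : Matrix.mulVecLin (g : Matrix (Fin n) (Fin n) ℂ)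
        (∑ a ∈ S, (Pi.single (p a) (1 : ℂ) : Fin n → ℂ)) = u := by
      rw [map_sum]
      rw [Finset.sum_congr rfl fun a _ => hgcol a]
      exact hw_u
    rw [hsum, ← hLspan]

open Submodule Matrix Set

set_option maxHeartbeats 2000000 in
/-- **Finiteness of Borel orbits on the configuration space of a complete partial flag
together with a line in its `i₀`-th member.**  Let `B` be the group of invertible
upper-triangular `n × n` complex matrices, acting on tuples
`(V 1 ⊆ ⋯ ⊆ V m, L)` of subspaces of `ℂ^n` with `dim (V i) = i`, `dim L = 1` and
`L ⊆ V i₀` by taking images of subspaces.  Then there are only finitely many orbits.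
(Here `V` is indexed by `Fin m`, with `V i` of dimension `i + 1`, and the `i₀`-th member
is the one of dimension `i₀`.) -/
theorem borel_finitely_many_orbits_flag_with_line
    (n m i₀ : ℕ) (hi₀ : 1 ≤ i₀) (him : i₀ ≤ m) (hmn : m ≤ n) :
    Finite (Quot (fun x y :
        {p : (Fin m → Submodule ℂ (Fin n → ℂ)) × Submodule ℂ (Fin n → ℂ) //
          (∀ i j : Fin m, i ≤ j → p.1 i ≤ p.1 j) ∧
          (∀ i : Fin m, Module.finrank ℂ ↥(p.1 i) = (i : ℕ) + 1) ∧
          Module.finrank ℂ ↥p.2 = 1 ∧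
          p.2 ≤ p.1 ⟨i₀ - 1, by omega⟩} =>
      ∃ g : (Matrix (Fin n) (Fin n) ℂ)ˣ,
        (∀ i j : Fin n, j < i → (g : Matrix (Fin n) (Fin n) ℂ) i j = 0) ∧
        (∀ i : Fin m,
          (x.1.1 i).map (Matrix.mulVecLin (g : Matrix (Fin n) (Fin n) ℂ)) = y.1.1 i) ∧
        x.1.2.map (Matrix.mulVecLin (g : Matrix (Fin n) (Fin n) ℂ)) = y.1.2)) := by
  classical
  have h₀ : Function.Injective (fun a : Fin m => (⟨(a : ℕ), lt_of_lt_of_le a.isLt hmn⟩ : Fin n)) ∧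
      ({⟨0, by omega⟩} : Finset (Fin m)).Nonempty ∧
      ∀ a ∈ ({⟨0, by omega⟩} : Finset (Fin m)), (a : ℕ) < i₀ := by
    refine ⟨?_, ⟨_, Finset.mem_singleton_self _⟩, ?_⟩
    · intro a b hab
      have := congrArg Fin.val hab
      exact Fin.ext this
    · intro a ha
      rw [Finset.mem_singleton] at ha
      subst ha
      simpa using Nat.lt_of_lt_of_le Nat.zero_lt_one hi₀
  refine Finite.of_surjective
    (fun d : (Fin m → Fin n) × Finset (Fin m) =>
      if h : Function.Injective d.1 ∧ d.2.Nonempty ∧ ∀ a ∈ d.2, (a : ℕ) < i₀ then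
        Quot.mk _ (canonElt n m i₀ hi₀ him hmn d.1 d.2 h)
      else Quot.mk _ (canonElt n m i₀ hi₀ him hmn _ _ h₀)) ?_
  intro z
  obtain ⟨x, rfl⟩ := Quot.exists_rep z
  obtain ⟨hmono, hdim, hL1, hLle⟩ := x.2
  obtain ⟨p, S, hpinj, hSne, hSlt, g, hgtri, hgV, hgL⟩ :=
    exists_canon_data hi₀ him hmn x.1.1 x.1.2 hmono hdim hL1 hLle
  refine ⟨(p, S), ?_⟩
  dsimp only
  rw [dif_pos (⟨hpinj, hSne, hSlt⟩ :
    Function.Injective p ∧ S.Nonempty ∧ ∀ a ∈ S, (a : ℕ) < i₀)]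
  exact Quot.sound ⟨g, hgtri, hgV, hgL⟩
end

section
/- Let K be a field, V an n-dimensional K-vector space, and F_1 ⊂ F_2 ⊂ ⋯ ⊂ F_n = V a complete flag of subspaces with dim F_d = d for all d. Let 1 ≤ k_1 < k_2 < ⋯ < k_h ≤ n (set k_0 = 0), let 1 ≤ a_1 < ⋯ < a_{k_h} ≤ n be integers, and let α : {1, …, k_h} → {1, …, h} satisfy #{i : α_i = t} = k_t − k_{t−1} for all t; set μ_{i,t} = #{i' ≤ i : α_{i'} ≤ t}. Let Λ_1 ⊆ Λ_2 ⊆ ⋯ ⊆ Λ_h be subspaces with dim Λ_t = k_t and dim(F_{a_i} ∩ Λ_t) = μ_{i,t} for all 1 ≤ i ≤ k_h and 1 ≤ t ≤ h. Suppose W^{t,i} (1 ≤ t ≤ h, 1 ≤ i ≤ k_h − 1) are subspaces with dim W^{t,i} = μ_{i,t} satisfying the row conditions W^{t,1} ⊆ W^{t,2} ⊆ ⋯ ⊆ W^{t,k_h−1} ⊆ Λ_t for each t and the column conditions W^{1,i} ⊆ W^{2,i} ⊆ ⋯ ⊆ W^{h,i} ⊆ F_{a_i} for each i. Then W^{t,i}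 = Λ_t ∩ F_{a_i} for all t and i. -/
/-- `schubertMu α i t = #{i' ≤ i | α i' ≤ t}` (with `i'` ranging over `1, …, i`), the
rank numbers `μ_{i,t}` attached to a Schubert index `(a, α)` for a partial flag
variety. -/
def schubertMu (α : ℕ → ℕ) (i t : ℕ) : ℕ :=
  ((Finset.Icc 1 i).filter (fun i' => α i' ≤ t)).card

/-- **Uniqueness of the fiber of the resolution over the open Schubert cell of a partial
flag variety `F(k 1, …, k h; n)`.**  Let `V` be `n`-dimensional over `K` with a complete
flag `F`, let `(a, α)` be a Schubert index with rank numbers `μ_{i,t} = schubertMu α i t`,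
and let `(Λ 1 ⊆ ⋯ ⊆ Λ h)` lie in the open Schubert cell, i.e.
`dim (F (a i) ⊓ Λ t) = μ_{i,t}` for all `i, t`.  If subspaces `W t i` of dimension
`μ_{i,t}` satisfy the row conditions `W t 1 ⊆ ⋯ ⊆ W t (k h − 1) ⊆ Λ t` and the column
conditions `W 1 i ⊆ ⋯ ⊆ W h i ⊆ F (a i)`, then `W t i = Λ t ⊓ F (a i)` for all
`1 ≤ t ≤ h` and `1 ≤ i ≤ k h − 1`. -/
theorem csm_flag_variety_fiber_unique
    (K : Type*) [Field K] (V : Type*) [AddCommGroup V] [Module K V]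
    [FiniteDimensional K V]
    (n h : ℕ) (hh : 1 ≤ h) (hV : Module.finrank K V = n)
    (F : ℕ → Submodule K V)
    (hFmono : ∀ d e, 1 ≤ d → d ≤ e → e ≤ n → F d ≤ F e)
    (hFdim : ∀ d, 1 ≤ d → d ≤ n → Module.finrank K ↥(F d) = d)
    (hFtop : F n = ⊤)
    (k : ℕ → ℕ) (hk0 : k 0 = 0)
    (hkmono : ∀ t u, t < u → u ≤ h → k t < k u) (hkn : k h ≤ n)
    (a : ℕ → ℕ) (ha1 : 1 ≤ a 1) (han : a (k h) ≤ n)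
    (hamono : ∀ i j, 1 ≤ i → i < j → j ≤ k h → a i < a j)
    (α : ℕ → ℕ)
    (hα : ∀ i, 1 ≤ i → i ≤ k h → 1 ≤ α i ∧ α i ≤ h)
    (hαcount : ∀ t, 1 ≤ t → t ≤ h →
      ((Finset.Icc 1 (k h)).filter (fun i => α i = t)).card = k t - k (t - 1))
    (Λ : ℕ → Submodule K V)
    (hΛmono : ∀ t u, 1 ≤ t → t ≤ u → u ≤ h → Λ t ≤ Λ u)
    (hΛdim : ∀ t, 1 ≤ t → t ≤ h → Module.finrank K ↥(Λ t) = k t)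
    (hcell : ∀ i t, 1 ≤ i → i ≤ k h → 1 ≤ t → t ≤ h →
      Module.finrank K ↥(F (a i) ⊓ Λ t) = schubertMu α i t)
    (W : ℕ → ℕ → Submodule K V)
    (hWdim : ∀ t i, 1 ≤ t → t ≤ h → 1 ≤ i → i ≤ k h - 1 →
      Module.finrank K ↥(W t i) = schubertMu α i t)
    (hWrow : ∀ t i, 1 ≤ t → t ≤ h → 1 ≤ i → i + 1 ≤ k h - 1 → W t i ≤ W t (i + 1))
    (hWrowTop : ∀ t, 1 ≤ t → t ≤ h → W t (k h - 1) ≤ Λ t)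
    (hWcol : ∀ t i, 1 ≤ t → t + 1 ≤ h → 1 ≤ i → i ≤ k h - 1 → W t i ≤ W (t + 1) i)
    (hWcolTop : ∀ i, 1 ≤ i → i ≤ k h - 1 → W h i ≤ F (a i)) :
    ∀ t i, 1 ≤ t → t ≤ h → 1 ≤ i → i ≤ k h - 1 → W t i = Λ t ⊓ F (a i) := by
  intro t i ht1 hth hi1 hik
  -- row chain: W t i ≤ W t j for i ≤ j ≤ k h - 1
  have row : ∀ j, i ≤ j → j ≤ k h - 1 → W t i ≤ W t j := by
    intro j
    induction j with
    | zero => intro hij _; omega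
    | succ m ih =>
      intro hij hjk
      rcases Nat.lt_or_ge i (m + 1) with hlt | hge
      · exact le_trans (ih (by omega) (by omega)) (hWrow t m ht1 hth (by omega) hjk)
      · have : i = m + 1 := by omega
        subst this; exact le_rfl
  have hWΛ : W t i ≤ Λ t :=
    le_trans (row (k h - 1) hik le_rfl) (hWrowTop t ht1 hth)
  -- column chain: W t i ≤ W u i for t ≤ u ≤ h
  have col : ∀ u, t ≤ u → u ≤ h → W t i ≤ W u i := by
    intro u
    induction u with
    | zero => intro htu _; omega
    | succ m ih =>
      intro htu huh
      rcases Nat.lt_or_ge t (m + 1) with hlt | hge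
      · exact le_trans (ih (by omega) (by omega)) (hWcol m i (by omega) huh hi1 hik)
      · have : t = m + 1 := by omega
        subst this; exact le_rfl
  have hWF : W t i ≤ F (a i) :=
    le_trans (col h hth le_rfl) (hWcolTop i hi1 hik)
  have hle : W t i ≤ Λ t ⊓ F (a i) := le_inf hWΛ hWF
  refine Submodule.eq_of_le_of_finrank_eq hle ?_
  rw [hWdim t i ht1 hth hi1 hik, inf_comm, hcell i t hi1 (by omega) ht1 hth]
end
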